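/- Let $\Gamma$ be a group of bijections of a set $Y$, let $D \subseteq Y$ satisfy $D \cap \alpha(D) = \emptyset$ for all $\alpha \in \Gamma$ other than the identity, and let $\tilde\gamma \subseteq Y$. Suppose $\alpha \in \Gamma$ is not in the stabilizer of $\tilde\gamma$, that $\tilde\gamma \cap \alpha(\tilde\gamma)$ contains at most one point, and let $x_0, y_0 \in \tilde\gamma \cap D$. Then $\alpha(y_0) \notin \tilde\gamma$ or $\alpha^{-1}(x_0) \notin \tilde\gamma$. -/
import Mathlib

theorem stmt10 {Y : Type*} (Γ : Subgroup (Equiv.Perm Y)) (D : Set Y)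
    (hD : ∀ α ∈ Γ, α ≠ 1 → D ∩ (⇑α '' D) = ∅)
    (γ : Set Y) (α : Equiv.Perm Y) (hα : α ∈ Γ)
    (hstab : ⇑α '' γ ≠ γ) (hone : (γ ∩ ⇑α '' γ).Subsingleton)
    (x₀ y₀ : Y) (hx₀ : x₀ ∈ γ ∩ D) (hy₀ : y₀ ∈ γ ∩ D) :
    α y₀ ∉ γ ∨ α⁻¹ x₀ ∉ γ := by
  by_contra h
  push_neg at h
  obtain ⟨h1, h2⟩ := h
  have hne : α ≠ 1 := by
    intro e; apply hstab; simp [e]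
  have hxm : x₀ ∈ γ ∩ ⇑α '' γ := ⟨hx₀.1, ⟨α⁻¹ x₀, h2, by simp⟩⟩
  have hym : α y₀ ∈ γ ∩ ⇑α '' γ := ⟨h1, ⟨y₀, hy₀.1, rfl⟩⟩
  have heq : α y₀ = x₀ := hone hym hxm
  have : x₀ ∈ D ∩ ⇑α '' D := ⟨hx₀.2, ⟨y₀, hy₀.2, heq⟩⟩
  rw [hD α hα hne] at this
  exact this
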